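/- Let P be the bilinear interpolant determined by Δx > 0, Δy > 0 and corner values Q11, Q21, Q12, Q22, let m ≥ 1 be a natural number, set h = Δy/m, and let y_j = (j − 1/2)·h for j = 1,…,m be the fine-grid face midpoints along a vertical coarse-cell face. Then the discrete sum of the x-fluxes over the m fine faces satisfies ∑_{j=1}^{m} (∂P/∂x)(x, y_j) · h = ((Q21 − Q11) + (Q22 − Q12)) · Δy / (2·Δx), for every x. -/

import Mathlib

/-- The bilinear interpolant on the rectangle `[0, Δx] × [0, Δy]` with corner values
`Q11, Q21, Q12, Q22`. -/
noncomputable def bilerp (Δx Δy Q11 Q21 Q12 Q22 : ℝ) : ℝ × ℝ → ℝ :=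
  fun p =>
    (1 / (Δx * Δy)) *
      (Q11 * (Δx - p.1) * (Δy - p.2) + Q21 * p.1 * (Δy - p.2) +
        Q12 * (Δx - p.1) * p.2 + Q22 * p.1 * p.2)

/-!
Along each horizontal line `P` is affine in `x`, so `∂P/∂x (x, y)` does not depend on `x` and is
affine in `y`. The midpoint rule is exact for affine integrands, so the flux sum equals
`∫₀^Δy ∂P/∂x (x, y) dy`, which is the average of the two edge slopes times `Δy`.
-/

open Finset

theorem hasDerivAt_bilerp_fst (Δx Δy Q11 Q21 Q12 Q22 y x : ℝ) :
    HasDerivAt (fun t => bilerp Δx Δy Q11 Q21 Q12 Q22 (t, y))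
      (((Q21 - Q11) * (Δy - y) + (Q22 - Q12) * y) / (Δx * Δy)) x := by
  refine ((hasDerivAt_mul_const _).add_const
    ((Q11 * (Δy - y) + Q12 * y) * Δx / (Δx * Δy))).congr_of_eventuallyEq
    (Filter.Eventually.of_forall fun t => ?_)
  simp only [bilerp]
  ring

theorem sum_midpoint_rule_affine (a b h : ℝ) (m : ℕ) :
    ∑ j ∈ Icc 1 m, (a + b * (((j : ℝ) - 1 / 2) * h)) * h = a * (m * h) + b * (m * h) ^ 2 / 2 := by
  induction m with
  | zero => simp
  | succ n ih =>
    rw [sum_Icc_succ_top (by omega), ih]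
    push_cast
    ring

theorem bilerp_face_flux_sum_general (Δx Δy Q11 Q21 Q12 Q22 : ℝ)
    (m : ℕ) (hm : 1 ≤ m) (h : ℝ) (hh : h = Δy / m) :
    ∀ x : ℝ,
      (∑ j ∈ Finset.Icc 1 m,
          deriv (fun t => bilerp Δx Δy Q11 Q21 Q12 Q22 (t, ((j : ℝ) - 1 / 2) * h)) x * h) =
        ((Q21 - Q11) + (Q22 - Q12)) * Δy / (2 * Δx) := by
  intro x
  have hmh : m * h = Δy := by
    rw [hh, mul_div_cancel₀ _ (by exact_mod_cast (by omega : m ≠ 0))]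
  have hflux : ∀ j : ℕ,
      deriv (fun t => bilerp Δx Δy Q11 Q21 Q12 Q22 (t, ((j : ℝ) - 1 / 2) * h)) x * h =
        ((Q21 - Q11) * Δy / (Δx * Δy) +
          ((Q22 - Q12) - (Q21 - Q11)) / (Δx * Δy) * (((j : ℝ) - 1 / 2) * h)) * h := by
    intro j
    rw [(hasDerivAt_bilerp_fst ..).deriv]
    ring
  rw [sum_congr rfl fun j _ => hflux j, sum_midpoint_rule_affine, hmh]
  field_simp
  ring

/-- The discrete sum of the interpolated `x`-fluxes over the `m` fine faces lying on a
vertical coarse-cell face equals `((Q21 − Q11) + (Q22 − Q12)) · Δy / (2·Δx)`,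
for every `x`. Here `h = Δy/m` and `y_j = (j − 1/2)·h` are the fine-face midpoints. -/
theorem bilerp_face_flux_sum (Δx Δy Q11 Q21 Q12 Q22 : ℝ) (hΔx : 0 < Δx) (hΔy : 0 < Δy)
    (m : ℕ) (hm : 1 ≤ m) (h : ℝ) (hh : h = Δy / m) :
    ∀ x : ℝ,
      (∑ j ∈ Finset.Icc 1 m,
          deriv (fun t => bilerp Δx Δy Q11 Q21 Q12 Q22 (t, ((j : ℝ) - 1 / 2) * h)) x * h) =
        ((Q21 - Q11) + (Q22 - Q12)) * Δy / (2 * Δx) :=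
  bilerp_face_flux_sum_general Δx Δy Q11 Q21 Q12 Q22 m hm h hh
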